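/- arXiv:2411.18166 — 2 statements merged into one kernel-verified Lean document; each statement's English description precedes it below -/
import Mathlib

section
/- With the setup of the lumping reduction: define reduced matrices A'_i = A_i for i = 1,...,n_p−1 and A'_{n_p} = (1/β)(Σ_{i=n_p}^{n̂_p−1} exp(b_i) A_i + A_{n̂_p}), where β = 1 + Σ_{i=n_p}^{n̂_p−1} exp(b_i). Let p ∈ ℝ^{n̂_p} be the full softmax probabilities (logits N̄_1,...,N̄_{n_p−1}, b_{n_p},...,b_{n̂_p−1}, 0) and p' ∈ ℝ^{n_p} the reduced softmax probabilities (logits N̄_i − log β, i = 1,...,n_p−1, and 0). Then Σ_{i=1}^{n̂_p} p_i A_i = Σ_{i=1}^{n_p} p'_i A'_i. -/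
/-!
Shifting the first `np - 1` logits by `-log β` divides their weights by `β`, so the reduced
normalizer satisfies `D = β * D'`. The lumped category then carries weight `1 / D'`, and since
`A'` is the `β`-normalized combination of the lumped matrices, `(1 / D') • (1 / β) • _`
distributes back into the weights `exp (b i) / D` and `1 / D` of the full model.
-/

namespace Real

theorem exp_sub_log (x : ℝ) {β : ℝ} (hβ : 0 < β) : exp (x - log β) = exp x / β := by
  rw [exp_sub, exp_log hβ]

theorem mul_one_add_sum_exp_sub_log {ι : Type*} (s : Finset ι) (x : ι → ℝ) {β : ℝ}
    (hβ : 0 < β) : β * (1 + ∑ i ∈ s, exp (x i - log β)) = β + ∑ i ∈ s, exp (x i) := by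
  simp only [exp_sub_log _ hβ, ← Finset.sum_div, mul_add, mul_one,
    mul_div_cancel₀ _ hβ.ne']

end Real

theorem smul_smul_sum_smul_add {ι R M : Type*} [Semiring R] [AddCommMonoid M] [Module R M]
    (s : Finset ι) (c : ι → R) (A : ι → M) (v : M) (a b : R) :
    a • b • ((∑ i ∈ s, c i • A i) + v) = (∑ i ∈ s, (a * b * c i) • A i) + (a * b) • v := by
  simp only [smul_add, Finset.smul_sum, smul_smul, mul_assoc]

-- Categories are 0-indexed: logits `Nbar i` for `i < np - 1`, `b i` for
-- `np - 1 ≤ i < nhp - 1`, and `0` for the last category `nhp - 1`.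
theorem softmax_model_reduction_lumping_general
    {M : Type*} [AddCommGroup M] [Module ℝ M]
    (np nhp : ℕ)
    (Nbar : ℕ → ℝ) (b : ℕ → ℝ) (A : ℕ → M)
    (β D D' : ℝ)
    (hβ : β = 1 + ∑ i ∈ Finset.Ico (np - 1) (nhp - 1), Real.exp (b i))
    (hD : D = 1 + (∑ i ∈ Finset.range (np - 1), Real.exp (Nbar i))
        + ∑ i ∈ Finset.Ico (np - 1) (nhp - 1), Real.exp (b i))
    (hD' : D' = 1 + ∑ i ∈ Finset.range (np - 1),
        Real.exp (Nbar i - Real.log β)) :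
    (∑ i ∈ Finset.range (np - 1), (Real.exp (Nbar i) / D) • A i)
      + (∑ i ∈ Finset.Ico (np - 1) (nhp - 1), (Real.exp (b i) / D) • A i)
      + (1 / D) • A (nhp - 1)
    = (∑ i ∈ Finset.range (np - 1),
        (Real.exp (Nbar i - Real.log β) / D') • A i)
      + (1 / D') • ((1 / β) •
          ((∑ i ∈ Finset.Ico (np - 1) (nhp - 1), Real.exp (b i) • A i)
            + A (nhp - 1))) := by
  have hβpos : 0 < β := hβ ▸ by positivity
  have hD_eq : D = β * D' := by
    rw [hD', Real.mul_one_add_sum_exp_sub_log _ _ hβpos, hD, hβ]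
    ring
  have hshifted (x : ℝ) : Real.exp (x - Real.log β) / D' = Real.exp x / D := by
    rw [Real.exp_sub_log _ hβpos, hD_eq, div_div, mul_comm]
  have hlumped : 1 / D' * (1 / β) = 1 / D := by
    rw [hD_eq, one_div_mul_one_div, mul_comm]
  simp only [hshifted, smul_smul_sum_smul_add, hlumped, one_div_mul_eq_div, add_assoc]

/-- Proposition 5, lumping reduction: the full softmax combination of
the matrices A_i equals the reduced softmax combination of the lumped matrices.
Categories are 0-indexed: logits Nbar i for i < np-1, b i for np-1 ≤ i < nhp-1,
and 0 for the last category nhp-1. -/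
theorem softmax_model_reduction_lumping
    {M : Type*} [AddCommGroup M] [Module ℝ M]
    (np nhp : ℕ) (hnp : 1 ≤ np) (hle : np ≤ nhp)
    (Nbar : ℕ → ℝ) (b : ℕ → ℝ) (A : ℕ → M)
    (β D D' : ℝ)
    (hβ : β = 1 + ∑ i ∈ Finset.Ico (np - 1) (nhp - 1), Real.exp (b i))
    (hD : D = 1 + (∑ i ∈ Finset.range (np - 1), Real.exp (Nbar i))
        + ∑ i ∈ Finset.Ico (np - 1) (nhp - 1), Real.exp (b i))
    (hD' : D' = 1 + ∑ i ∈ Finset.range (np - 1),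
        Real.exp (Nbar i - Real.log β)) :
    (∑ i ∈ Finset.range (np - 1), (Real.exp (Nbar i) / D) • A i)
      + (∑ i ∈ Finset.Ico (np - 1) (nhp - 1), (Real.exp (b i) / D) • A i)
      + (1 / D) • A (nhp - 1)
    = (∑ i ∈ Finset.range (np - 1),
        (Real.exp (Nbar i - Real.log β) / D') • A i)
      + (1 / D') • ((1 / β) •
          ((∑ i ∈ Finset.Ico (np - 1) (nhp - 1), Real.exp (b i) • A i)
            + A (nhp - 1))) :=
  softmax_model_reduction_lumping_general np nhp Nbar b A β D D' hβ hD hD'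
end

section
/- Suppose X(q) = {x : Fx ≤ q} is convex (a polytope) and equal to conv{V_k q : k}, and suppose for each vertex k and each i ∈ {1,...,n_p} the robust invariance inequality F(A_i V_k q + B_i u_k + K_i c_w) + κ|F K_i| ε_w ≤ q holds. Then for every x ∈ X(q), writing x = Σ_k λ_k V_k q with λ in the simplex and defining u(x) = Σ_k λ_k u_k, for every p in the unit simplex of ℝ^{n_p} and every w with |w − c_w| ≤ κ ε_w, the successor Σ_i p_i (A_i x + B_i u(x) + K_i w) belongs to X(q). -/
open Matrix


/-- under the robust invariance inequalities (14a), for every point x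
of X(q) expressed as a convex combination of the vertices, the convex-combination
input keeps every uncertain successor in X(q). -/
theorem rci_for_full_uncertain_system (n m f ny np v : ℕ)
    (F : Matrix (Fin f) (Fin n) ℝ) (q : Fin f → ℝ)
    (V : Fin v → Matrix (Fin n) (Fin f) ℝ)
    (hXrep : {x : Fin n → ℝ | F.mulVec x ≤ q}
      = convexHull ℝ (Set.range fun k => (V k).mulVec q))
    (A : Fin np → Matrix (Fin n) (Fin n) ℝ)
    (B : Fin np → Matrix (Fin n) (Fin m) ℝ)
    (K : Fin np → Matrix (Fin n) (Fin ny) ℝ)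
    (u : Fin v → (Fin m → ℝ))
    (cw εw : Fin ny → ℝ) (hεw : ∀ j, 0 ≤ εw j) (κ : ℝ) (hκ : 0 < κ)
    (hineq : ∀ (i : Fin np) (k : Fin v),
      F.mulVec ((A i).mulVec ((V k).mulVec q) + (B i).mulVec (u k)
          + (K i).mulVec cw)
        + κ • ((F * K i).map abs).mulVec εw ≤ q) :
    ∀ x ∈ {x : Fin n → ℝ | F.mulVec x ≤ q},
      ∀ lam : Fin v → ℝ, (∀ k, 0 ≤ lam k) → (∑ k, lam k) = 1 →
        x = (∑ k, lam k • (V k).mulVec q) →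
      ∀ p : Fin np → ℝ, (∀ i, 0 ≤ p i) → (∑ i, p i) = 1 →
      ∀ w : Fin ny → ℝ, (∀ j, |w j - cw j| ≤ κ * εw j) →
        (∑ i, p i • ((A i).mulVec x + (B i).mulVec (∑ k, lam k • u k)
            + (K i).mulVec w))
          ∈ {x : Fin n → ℝ | F.mulVec x ≤ q} := by
  intro x hx lam hlam hlam1 hxeq p hp hp1 w hw
  simp only [Set.mem_setOf_eq] at hx ⊢
  intro r
  -- linearity helpers
  have hsum : ∀ {β α : Type} [inst : Fintype α] (M : Matrix β α ℝ)
      (c : Fin v → ℝ) (g : Fin v → α → ℝ),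
      M *ᵥ (∑ k, c k • g k) = ∑ k, c k • (M *ᵥ g k) := by
    intro β α _ M c g
    have h := map_sum M.mulVecLin (fun k => c k • g k) Finset.univ
    simp only [Matrix.mulVecLin_apply] at h
    rw [h]
    exact Finset.sum_congr rfl fun k _ => Matrix.mulVec_smul M (c k) (g k)
  -- component value of mulVec of the big sum
  have key : (F *ᵥ (∑ i, p i • ((A i) *ᵥ x + (B i) *ᵥ (∑ k, lam k • u k)
      + (K i) *ᵥ w))) r
      = ∑ i, p i * ((F *ᵥ ((A i) *ᵥ x)) r + (F *ᵥ ((B i) *ᵥ (∑ k, lam k • u k))) r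
        + (F *ᵥ ((K i) *ᵥ w)) r) := by
    have := map_sum F.mulVecLin
      (fun i => p i • ((A i) *ᵥ x + (B i) *ᵥ (∑ k, lam k • u k) + (K i) *ᵥ w))
      Finset.univ
    simp only [Matrix.mulVecLin_apply] at this
    rw [this]
    simp [Matrix.mulVec_smul, Matrix.mulVec_add, Finset.sum_apply, mul_add]
  rw [key]
  -- per i bound
  have hbound : ∀ i : Fin np,
      (F *ᵥ ((A i) *ᵥ x)) r + (F *ᵥ ((B i) *ᵥ (∑ k, lam k • u k))) r
        + (F *ᵥ ((K i) *ᵥ w)) r ≤ q r := by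
    intro i
    -- expand A term
    have hA : F *ᵥ ((A i) *ᵥ x) = ∑ k, lam k • (F *ᵥ ((A i) *ᵥ ((V k) *ᵥ q))) := by
      rw [hxeq]
      rw [hsum (A i) lam (fun k => (V k) *ᵥ q)]
      exact hsum F lam (fun k => (A i) *ᵥ ((V k) *ᵥ q))
    have hB : F *ᵥ ((B i) *ᵥ (∑ k, lam k • u k))
        = ∑ k, lam k • (F *ᵥ ((B i) *ᵥ u k)) := by
      rw [hsum (B i) lam u]
      exact hsum F lam (fun k => (B i) *ᵥ u k)
    -- bound K term
    have hK : (F *ᵥ ((K i) *ᵥ w)) r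
        ≤ (F *ᵥ ((K i) *ᵥ cw)) r + κ * (((F * K i).map abs) *ᵥ εw) r := by
      have hFK : ∀ z : Fin ny → ℝ, F *ᵥ ((K i) *ᵥ z) = (F * K i) *ᵥ z := by
        intro z; rw [Matrix.mulVec_mulVec]
      rw [hFK, hFK]
      have hsplit : (F * K i) *ᵥ w = (F * K i) *ᵥ cw + (F * K i) *ᵥ (w - cw) := by
        have hv : cw + (w - cw) = w := by abel
        rw [← Matrix.mulVec_add, hv]
      rw [hsplit]
      simp only [Pi.add_apply]
      have h2 : ((F * K i) *ᵥ (w - cw)) r ≤ κ * ((F * K i).map abs *ᵥ εw) r := by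
        simp only [Matrix.mulVec, dotProduct, Matrix.map_apply]
        rw [Finset.mul_sum]
        apply Finset.sum_le_sum
        intro j _
        have h1 : (F * K i) r j * (w - cw) j ≤ |(F * K i) r j| * (κ * εw j) := by
          calc (F * K i) r j * (w - cw) j ≤ |(F * K i) r j * (w - cw) j| :=
                le_abs_self _
            _ = |(F * K i) r j| * |(w - cw) j| := abs_mul _ _
            _ ≤ |(F * K i) r j| * (κ * εw j) := by
                apply mul_le_mul_of_nonneg_left _ (abs_nonneg _)
                simpa using hw j
        linarith [h1]
      linarith [h2]
    calc (F *ᵥ ((A i) *ᵥ x)) r + (F *ᵥ ((B i) *ᵥ (∑ k, lam k • u k))) r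
          + (F *ᵥ ((K i) *ᵥ w)) r
        ≤ (F *ᵥ ((A i) *ᵥ x)) r + (F *ᵥ ((B i) *ᵥ (∑ k, lam k • u k))) r
          + ((F *ᵥ ((K i) *ᵥ cw)) r + κ * (((F * K i).map abs) *ᵥ εw) r) := by
          gcongr
      _ = ∑ k, lam k * ((F *ᵥ ((A i) *ᵥ ((V k) *ᵥ q))) r
            + (F *ᵥ ((B i) *ᵥ u k)) r + (F *ᵥ ((K i) *ᵥ cw)) r
            + κ * (((F * K i).map abs) *ᵥ εw) r) := by
          rw [hA, hB]
          simp only [Finset.sum_apply, Pi.smul_apply, smul_eq_mul, mul_add]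
          simp only [Finset.sum_add_distrib]
          rw [← Finset.sum_mul, ← Finset.sum_mul, hlam1, one_mul, one_mul]
          ring
      _ ≤ ∑ k, lam k * q r := by
          apply Finset.sum_le_sum
          intro k _
          apply mul_le_mul_of_nonneg_left _ (hlam k)
          have := hineq i k r
          simpa [Matrix.mulVec_add, smul_eq_mul] using this
      _ = q r := by rw [← Finset.sum_mul, hlam1, one_mul]
  calc ∑ i, p i * ((F *ᵥ ((A i) *ᵥ x)) r + (F *ᵥ ((B i) *ᵥ (∑ k, lam k • u k))) r
        + (F *ᵥ ((K i) *ᵥ w)) r)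
      ≤ ∑ i, p i * q r := by
        apply Finset.sum_le_sum
        intro i _
        exact mul_le_mul_of_nonneg_left (hbound i) (hp i)
    _ = q r := by rw [← Finset.sum_mul, hp1, one_mul]
end
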